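/- Uniqueness of the rule producing a given reduct: if t →_{p1} t' and t →_{p2} t' are weak reduction steps of the λ!-calculus with p1, p2 ∈ {dB, s!, d!}, then p1 = p2. -/
import Mathlib


/-! # The Bang Calculus Revisited: common definitions.

Terms are represented with de Bruijn indices, so that all the meta-level
substitutions are capture-avoiding by construction. -/

/-- Terms of the λ!-calculus.  `esub t u` is the explicit substitution
`t[0\u]`: the (anonymous) binder scopes over `t`, not over `u`. -/
inductive Tm : Type
  | var : ℕ → Tm
  | app : Tm → Tm → Tm
  | lam : Tm → Tm
  | bang : Tm → Tm
  | der : Tm → Tm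
  | esub : Tm → Tm → Tm
  deriving DecidableEq

namespace Tm

/-- lifting a renaming under a binder -/
def liftR (f : ℕ → ℕ) : ℕ → ℕ
  | 0 => 0
  | k + 1 => f k + 1

/-- renaming of free variables -/
def rename (f : ℕ → ℕ) : Tm → Tm
  | var k => var (f k)
  | app t u => app (rename f t) (rename f u)
  | lam t => lam (rename (liftR f) t)
  | bang t => bang (rename f t)
  | der t => der (rename f t)
  | esub t u => esub (rename (liftR f) t) (rename f u)

/-- lifting a simultaneous substitution under a binder -/
def liftS (σ : ℕ → Tm) : ℕ → Tm
  | 0 => var 0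
  | k + 1 => rename (· + 1) (σ k)

/-- simultaneous (capture-avoiding) substitution -/
def subst (σ : ℕ → Tm) : Tm → Tm
  | var k => σ k
  | app t u => app (subst σ t) (subst σ u)
  | lam t => lam (subst (liftS σ) t)
  | bang t => bang (subst σ t)
  | der t => der (subst σ t)
  | esub t u => esub (subst (liftS σ) t) (subst σ u)

/-- capture-avoiding substitution of `u` for the variable `0` of `t`,
where the result is placed under `n` extra binders (and `u` already lives
at that depth). -/
def substIn (n : ℕ) (u : Tm) (t : Tm) : Tm :=
  subst (fun k => match k with
    | 0 => u
    | k + 1 => var (k + n)) t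

/-- capture-avoiding meta-level substitution `t{0 := u}` -/
def subst0 (u : Tm) (t : Tm) : Tm := substIn 0 u t

/-- plugging a term into a list context `L ::= ◻ | L[x\t]`; the head of the
list is the argument of the outermost explicit substitution. -/
def plug : List Tm → Tm → Tm
  | [], s => s
  | e :: L, s => esub (plug L s) e

/-- the w-size of a term -/
def wsize : Tm → ℕ
  | var _ => 0
  | app t u => 1 + wsize t + wsize u
  | lam t => 1 + wsize t
  | bang _ => 0
  | der t => 1 + wsize t
  | esub t u => 1 + wsize t + wsize u

end Tm

/-- the names of the three rewriting rules of the λ!-calculus -/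
inductive Rule : Type
  | dB | sb | db
  deriving DecidableEq

open Tm in
/-- the three rewriting rules, applied at the root (at a distance) -/
inductive Root : Rule → Tm → Tm → Prop
  | dB (L : List Tm) (t u : Tm) :
      Root .dB (app (plug L (lam t)) u)
               (plug L (esub t (rename (· + L.length) u)))
  | sb (L : List Tm) (t u : Tm) :
      Root .sb (esub t (plug L (bang u))) (plug L (substIn L.length u t))
  | db (L : List Tm) (t : Tm) :
      Root .db (der (plug L (bang t))) (plug L t)

/-- closure of each rule under weak contexts (no reduction under `bang`) -/
inductive Step : Rule → Tm → Tm → Prop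
  | root {r : Rule} {t t' : Tm} : Root r t t' → Step r t t'
  | appL {r t t'} (u : Tm) : Step r t t' → Step r (Tm.app t u) (Tm.app t' u)
  | appR {r u u'} (t : Tm) : Step r u u' → Step r (Tm.app t u) (Tm.app t u')
  | lam {r t t'} : Step r t t' → Step r (Tm.lam t) (Tm.lam t')
  | der {r t t'} : Step r t t' → Step r (Tm.der t) (Tm.der t')
  | esubL {r t t'} (u : Tm) : Step r t t' → Step r (Tm.esub t u) (Tm.esub t' u)
  | esubR {r u u'} (t : Tm) : Step r u u' → Step r (Tm.esub t u) (Tm.esub t u')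

/-- the weak reduction `→w` of the λ!-calculus -/
def StepW (t t' : Tm) : Prop := ∃ r, Step r t t'

/-- counted weak reduction: `RedCnt t (b, e) u` holds iff `t →w* u` using `b`
dB-steps and `e` steps of kind s!/d!. -/
inductive RedCnt : Tm → ℕ × ℕ → Tm → Prop
  | refl (t : Tm) : RedCnt t (0, 0) t
  | db {t t₁ u : Tm} {b e : ℕ} :
      Step .dB t t₁ → RedCnt t₁ (b, e) u → RedCnt t (b + 1, e) u
  | ex {t t₁ u : Tm} {b e : ℕ} :
      (Step .sb t t₁ ∨ Step .db t t₁) → RedCnt t₁ (b, e) u →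
      RedCnt t (b, e + 1) u

mutual
  /-- neutral w-normal terms -/
  inductive NeW : Tm → Prop
    | var (k : ℕ) : NeW (Tm.var k)
    | app {t u : Tm} : NaW t → NoW u → NeW (Tm.app t u)
    | der {t : Tm} : NbW t → NeW (Tm.der t)
    | esub {t u : Tm} : NeW t → NbW u → NeW (Tm.esub t u)
  /-- neutral-abs w-normal terms -/
  inductive NaW : Tm → Prop
    | bang (t : Tm) : NaW (Tm.bang t)
    | ne {t : Tm} : NeW t → NaW t
    | esub {t u : Tm} : NaW t → NbW u → NaW (Tm.esub t u)
  /-- neutral-bang w-normal terms -/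
  inductive NbW : Tm → Prop
    | ne {t : Tm} : NeW t → NbW t
    | lam {t : Tm} : NoW t → NbW (Tm.lam t)
    | esub {t u : Tm} : NbW t → NbW u → NbW (Tm.esub t u)
  /-- w-normal terms -/
  inductive NoW : Tm → Prop
    | na {t : Tm} : NaW t → NoW t
    | nb {t : Tm} : NbW t → NoW t
end

/-- clashes -/
inductive Clash : Tm → Prop
  | appBang (L : List Tm) (t u : Tm) : Clash (Tm.app (Tm.plug L (Tm.bang t)) u)
  | esubLam (L : List Tm) (t u : Tm) : Clash (Tm.esub t (Tm.plug L (Tm.lam u)))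
  | derLam (L : List Tm) (u : Tm) : Clash (Tm.der (Tm.plug L (Tm.lam u)))
  | appLam (L : List Tm) (t u : Tm) : Clash (Tm.app t (Tm.plug L (Tm.lam u)))

/-- `WSub t s` holds iff `t = W⟨s⟩` for some weak context `W` -/
inductive WSub : Tm → Tm → Prop
  | refl (t : Tm) : WSub t t
  | appL {t s : Tm} (u : Tm) : WSub t s → WSub (Tm.app t u) s
  | appR {u s : Tm} (t : Tm) : WSub u s → WSub (Tm.app t u) s
  | lam {t s : Tm} : WSub t s → WSub (Tm.lam t) s
  | der {t s : Tm} : WSub t s → WSub (Tm.der t) s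
  | esubL {t s : Tm} (u : Tm) : WSub t s → WSub (Tm.esub t u) s
  | esubR {u s : Tm} (t : Tm) : WSub u s → WSub (Tm.esub t u) s

/-- weak clash freeness -/
def Wcf (t : Tm) : Prop := ¬ ∃ s, WSub t s ∧ Clash s

mutual
  /-- neutral weak clash free normal terms -/
  inductive NeCF : Tm → Prop
    | var (k : ℕ) : NeCF (Tm.var k)
    | app {t u : Tm} : NeCF t → NaCF u → NeCF (Tm.app t u)
    | der {t : Tm} : NeCF t → NeCF (Tm.der t)
    | esub {t u : Tm} : NeCF t → NeCF u → NeCF (Tm.esub t u)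
  /-- neutral-abs weak clash free normal terms -/
  inductive NaCF : Tm → Prop
    | bang (t : Tm) : NaCF (Tm.bang t)
    | ne {t : Tm} : NeCF t → NaCF t
    | esub {t u : Tm} : NaCF t → NeCF u → NaCF (Tm.esub t u)
  /-- neutral-bang weak clash free normal terms -/
  inductive NbCF : Tm → Prop
    | ne {t : Tm} : NeCF t → NbCF t
    | lam {t : Tm} : NoCF t → NbCF (Tm.lam t)
    | esub {t u : Tm} : NbCF t → NeCF u → NbCF (Tm.esub t u)
  /-- weak clash free normal terms -/
  inductive NoCF : Tm → Prop
    | na {t : Tm} : NaCF t → NoCF t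
    | nb {t : Tm} : NbCF t → NoCF t
end

/-- Types of system 𝒰: base types, multiset types and arrow types.  A
multiset type is given by a list of types (a representative of the multiset
it determines). -/
inductive Ty : Type
  | base : ℕ → Ty
  | mult : List Ty → Ty
  | arr : List Ty → Ty → Ty

/-- typing contexts: functions from (de Bruijn) variables to multiset types -/
abbrev Ctx := ℕ → Multiset Ty

/-- the context mapping `k` to `M` and anything else to the empty multiset -/
def Ctx.single (k : ℕ) (M : Multiset Ty) : Ctx := fun j => if j = k then M else 0

/-- removing the (type of the) bound variable `0` from a context -/
def Ctx.tail (Γ : Ctx) : Ctx := fun k => Γ (k + 1)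

/-- extending a context with a multiset type for a fresh variable `0` -/
def Ctx.cons (M : Multiset Ty) (Γ : Ctx) : Ctx := fun k =>
  match k with
  | 0 => M
  | k + 1 => Γ k

/-- Sized typing of system 𝒰: `DerU Γ t τ n` means that there is a derivation
of `Γ ⊢ t : τ` whose size (number of rules, not counting `bg`) is `n`. -/
inductive DerU : Ctx → Tm → Ty → ℕ → Prop
  | ax (k : ℕ) (σ : Ty) : DerU (Ctx.single k {σ}) (Tm.var k) σ 1
  | app {Γ Δ : Ctx} {t u : Tm} {M : List Ty} {τ : Ty} {n m : ℕ} :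
      DerU Γ t (Ty.arr M τ) n → DerU Δ u (Ty.mult M) m →
      DerU (Γ + Δ) (Tm.app t u) τ (n + m + 1)
  | abs {Γ : Ctx} {t : Tm} {τ : Ty} {n : ℕ} (M : List Ty) :
      DerU Γ t τ n → Multiset.ofList M = Γ 0 →
      DerU (Ctx.tail Γ) (Tm.lam t) (Ty.arr M τ) (n + 1)
  | es {Γ Δ : Ctx} {t u : Tm} {σ : Ty} {M : List Ty} {n m : ℕ} :
      DerU Γ t σ n → DerU Δ u (Ty.mult M) m → Multiset.ofList M = Γ 0 →
      DerU (Ctx.tail Γ + Δ) (Tm.esub t u) σ (n + m + 1)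
  | bg {t : Tm} (prs : List (Ctx × Ty × ℕ)) :
      (∀ p ∈ prs, DerU p.1 t p.2.1 p.2.2) →
      DerU ((prs.map (·.1)).sum) (Tm.bang t)
           (Ty.mult (prs.map (·.2.1))) ((prs.map (·.2.2)).sum)
  | dr {Γ : Ctx} {t : Tm} {σ : Ty} {n : ℕ} :
      DerU Γ t (Ty.mult [σ]) n → DerU Γ (Tm.der t) σ (n + 1)

/-! ## The source λ-calculus with explicit substitutions (CBN / CBV) -/

/-- terms of the λ-calculus with explicit substitutions (de Bruijn) -/
inductive Lm : Type
  | var : ℕ → Lm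
  | app : Lm → Lm → Lm
  | lam : Lm → Lm
  | esub : Lm → Lm → Lm
  deriving DecidableEq

namespace Lm

def liftR (f : ℕ → ℕ) : ℕ → ℕ
  | 0 => 0
  | k + 1 => f k + 1

def rename (f : ℕ → ℕ) : Lm → Lm
  | var k => var (f k)
  | app t u => app (rename f t) (rename f u)
  | lam t => lam (rename (liftR f) t)
  | esub t u => esub (rename (liftR f) t) (rename f u)

def liftS (σ : ℕ → Lm) : ℕ → Lm
  | 0 => var 0
  | k + 1 => rename (· + 1) (σ k)

def subst (σ : ℕ → Lm) : Lm → Lm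
  | var k => σ k
  | app t u => app (subst σ t) (subst σ u)
  | lam t => lam (subst (liftS σ) t)
  | esub t u => esub (subst (liftS σ) t) (subst σ u)

def substIn (n : ℕ) (u : Lm) (t : Lm) : Lm :=
  subst (fun k => match k with
    | 0 => u
    | k + 1 => var (k + n)) t

/-- capture-avoiding meta-level substitution `t{0 := u}` -/
def subst0 (u : Lm) (t : Lm) : Lm := substIn 0 u t

def plug : List Lm → Lm → Lm
  | [], s => s
  | e :: L, s => esub (plug L s) e

/-- values -/
def IsVal : Lm → Prop
  | var _ => True
  | lam _ => True
  | _ => False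

/-- the n-size of a term -/
def nsize : Lm → ℕ
  | var _ => 0
  | lam t => 1 + nsize t
  | app t _ => 1 + nsize t
  | esub t _ => 1 + nsize t

/-- the v-size of a term -/
def vsize : Lm → ℕ
  | var _ => 0
  | lam _ => 0
  | app t u => 1 + vsize t + vsize u
  | esub t u => 1 + vsize t + vsize u

end Lm

/-- names of the CBN rules -/
inductive NRule : Type
  | dB | s
  deriving DecidableEq

/-- call-by-name reduction (closure of dB and s under CBN contexts) -/
inductive StepN : NRule → Lm → Lm → Prop
  | dB (L : List Lm) (t u : Lm) :
      StepN .dB (Lm.app (Lm.plug L (Lm.lam t)) u)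
                (Lm.plug L (Lm.esub t (Lm.rename (· + L.length) u)))
  | s (t u : Lm) : StepN .s (Lm.esub t u) (Lm.subst0 u t)
  | appL {r t t'} (u : Lm) : StepN r t t' → StepN r (Lm.app t u) (Lm.app t' u)
  | lam {r t t'} : StepN r t t' → StepN r (Lm.lam t) (Lm.lam t')
  | esubL {r t t'} (u : Lm) : StepN r t t' → StepN r (Lm.esub t u) (Lm.esub t' u)

/-- names of the CBV rules -/
inductive VRule : Type
  | dB | sv
  deriving DecidableEq

/-- call-by-value reduction (closure of dB and sv under CBV contexts) -/
inductive StepV : VRule → Lm → Lm → Prop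
  | dB (L : List Lm) (t u : Lm) :
      StepV .dB (Lm.app (Lm.plug L (Lm.lam t)) u)
                (Lm.plug L (Lm.esub t (Lm.rename (· + L.length) u)))
  | sv (L : List Lm) (t v : Lm) (hv : Lm.IsVal v) :
      StepV .sv (Lm.esub t (Lm.plug L v)) (Lm.plug L (Lm.substIn L.length v t))
  | appL {r t t'} (u : Lm) : StepV r t t' → StepV r (Lm.app t u) (Lm.app t' u)
  | appR {r u u'} (t : Lm) : StepV r u u' → StepV r (Lm.app t u) (Lm.app t u')
  | esubL {r t t'} (u : Lm) : StepV r t t' → StepV r (Lm.esub t u) (Lm.esub t' u)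
  | esubR {r u u'} (t : Lm) : StepV r u u' → StepV r (Lm.esub t u) (Lm.esub t u')

mutual
  /-- CBN neutral terms -/
  inductive NeN : Lm → Prop
    | var (k : ℕ) : NeN (Lm.var k)
    | app {t : Lm} (u : Lm) : NeN t → NeN (Lm.app t u)
  /-- CBN normal terms -/
  inductive NoN : Lm → Prop
    | lam {t : Lm} : NoN t → NoN (Lm.lam t)
    | ne {t : Lm} : NeN t → NoN t
end

mutual
  /-- CBV (substituted) variables -/
  inductive VrV : Lm → Prop
    | var (k : ℕ) : VrV (Lm.var k)
    | esub {t u : Lm} : VrV t → NeV u → VrV (Lm.esub t u)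
  /-- CBV neutral terms -/
  inductive NeV : Lm → Prop
    | app₁ {t u : Lm} : VrV t → NoV u → NeV (Lm.app t u)
    | app₂ {t u : Lm} : NeV t → NoV u → NeV (Lm.app t u)
    | esub {t u : Lm} : NeV t → NeV u → NeV (Lm.esub t u)
  /-- CBV normal terms -/
  inductive NoV : Lm → Prop
    | lam (t : Lm) : NoV (Lm.lam t)
    | vr {t : Lm} : VrV t → NoV t
    | ne {t : Lm} : NeV t → NoV t
    | esub {t u : Lm} : NoV t → NeV u → NoV (Lm.esub t u)
end

/-- counted CBN reduction, recording the number of dB- and s-steps -/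
inductive RedCntN : Lm → ℕ × ℕ → Lm → Prop
  | refl (t : Lm) : RedCntN t (0, 0) t
  | db {t t₁ u : Lm} {b e : ℕ} :
      StepN .dB t t₁ → RedCntN t₁ (b, e) u → RedCntN t (b + 1, e) u
  | s {t t₁ u : Lm} {b e : ℕ} :
      StepN .s t t₁ → RedCntN t₁ (b, e) u → RedCntN t (b, e + 1) u

/-- counted CBV reduction, recording the number of dB- and sv-steps -/
inductive RedCntV : Lm → ℕ × ℕ → Lm → Prop
  | refl (t : Lm) : RedCntV t (0, 0) t
  | db {t t₁ u : Lm} {b e : ℕ} :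
      StepV .dB t t₁ → RedCntV t₁ (b, e) u → RedCntV t (b + 1, e) u
  | sv {t t₁ u : Lm} {b e : ℕ} :
      StepV .sv t t₁ → RedCntV t₁ (b, e) u → RedCntV t (b, e + 1) u

/-- the CBN embedding into the λ!-calculus -/
def cbn : Lm → Tm
  | .var k => .var k
  | .lam t => .lam (cbn t)
  | .app t u => .app (cbn t) (.bang (cbn u))
  | .esub t u => .esub (cbn t) (.bang (cbn u))

/-- `deBang t = some s'` iff `t = L⟨!s⟩` and `s' = L⟨s⟩` -/
def deBang : Tm → Option Tm
  | .bang s => some s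
  | .esub t e => (deBang t).map (fun s => Tm.esub s e)
  | _ => none

/-- the CBV embedding into the λ!-calculus -/
def cbv : Lm → Tm
  | .var k => .bang (.var k)
  | .lam t => .bang (.lam (cbv t))
  | .app t u =>
      match deBang (cbv t) with
      | some r => Tm.app r (cbv u)
      | none => Tm.app (.der (cbv t)) (cbv u)
  | .esub t u => .esub (cbv t) (cbv u)

/-- Sized typing of system 𝒩 (call-by-name): `DerN Γ t τ n` means that there
is a derivation of `Γ ⊢ t : τ` of size `n` (counting all rules). -/
inductive DerN : Ctx → Lm → Ty → ℕ → Prop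
  | ax (k : ℕ) (σ : Ty) : DerN (Ctx.single k {σ}) (Lm.var k) σ 1
  | app {Γ : Ctx} {t u : Lm} {τ : Ty} {n : ℕ} (prs : List (Ctx × Ty × ℕ)) :
      DerN Γ t (Ty.arr (prs.map (·.2.1)) τ) n →
      (∀ p ∈ prs, DerN p.1 u p.2.1 p.2.2) →
      DerN (Γ + (prs.map (·.1)).sum) (Lm.app t u) τ
           (n + (prs.map (·.2.2)).sum + 1)
  | abs {Γ : Ctx} {t : Lm} {τ : Ty} {n : ℕ} (M : List Ty) :
      DerN Γ t τ n → Multiset.ofList M = Γ 0 →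
      DerN (Ctx.tail Γ) (Lm.lam t) (Ty.arr M τ) (n + 1)
  | es {Γ : Ctx} {t u : Lm} {τ : Ty} {n : ℕ} (prs : List (Ctx × Ty × ℕ)) :
      DerN Γ t τ n →
      Multiset.ofList (prs.map (·.2.1)) = Γ 0 →
      (∀ p ∈ prs, DerN p.1 u p.2.1 p.2.2) →
      DerN (Ctx.tail Γ + (prs.map (·.1)).sum) (Lm.esub t u) τ
           (n + (prs.map (·.2.2)).sum + 1)

/-- Sized typing of system 𝒱 (call-by-value): `DerV Γ t τ n` means that there
is a derivation of `Γ ⊢ t : τ` of size `n` (each rule counts 1, except that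
`ax` counts the cardinal of its multiset and `abs` contributes the sizes of
its premises plus the number of premises). -/
inductive DerV : Ctx → Lm → Ty → ℕ → Prop
  | ax (k : ℕ) (M : List Ty) :
      DerV (Ctx.single k (Multiset.ofList M)) (Lm.var k) (Ty.mult M) M.length
  | es {Γ Δ : Ctx} {t u : Lm} {σ : Ty} {M : List Ty} {n m : ℕ} :
      DerV Γ t σ n → DerV Δ u (Ty.mult M) m → Multiset.ofList M = Γ 0 →
      DerV (Ctx.tail Γ + Δ) (Lm.esub t u) σ (n + m + 1)
  | abs {t : Lm} (prs : List (Ctx × List Ty × Ty × ℕ)) :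
      (∀ p ∈ prs, DerV p.1 t p.2.2.1 p.2.2.2) →
      (∀ p ∈ prs, Multiset.ofList p.2.1 = p.1 0) →
      DerV ((prs.map (fun p => Ctx.tail p.1)).sum) (Lm.lam t)
           (Ty.mult (prs.map (fun p => Ty.arr p.2.1 p.2.2.1)))
           ((prs.map (·.2.2.2)).sum + prs.length)
  | app {Γ Δ : Ctx} {t u : Lm} {M : List Ty} {τ : Ty} {n m : ℕ} :
      DerV Γ t (Ty.mult [Ty.arr M τ]) n → DerV Δ u (Ty.mult M) m →
      DerV (Γ + Δ) (Lm.app t u) τ (n + m + 1)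

namespace RuleUniqueAux

open Tm

/-- full size of a term (counting under bang) -/
def sz : Tm → ℕ
  | .var _ => 1
  | .app t u => 1 + sz t + sz u
  | .lam t => 1 + sz t
  | .bang t => 1 + sz t
  | .der t => 1 + sz t
  | .esub t u => 1 + sz t + sz u

lemma sz_pos (t : Tm) : 1 ≤ sz t := by
  cases t <;> simp [sz] <;> omega

lemma sz_subst (t : Tm) : ∀ σ : ℕ → Tm, sz t ≤ sz (subst σ t) := by
  induction t with
  | var k => intro σ; simpa [subst, sz] using sz_pos (σ k)
  | app a b iha ihb =>
      intro σ; have := iha σ; have := ihb σ; simp [subst, sz]; omega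
  | lam a iha => intro σ; have := iha (liftS σ); simp [subst, sz]; omega
  | bang a iha => intro σ; have := iha σ; simp [subst, sz]; omega
  | der a iha => intro σ; have := iha σ; simp [subst, sz]; omega
  | esub a b iha ihb =>
      intro σ; have := iha (liftS σ); have := ihb σ; simp [subst, sz]; omega

lemma sz_substIn (n : ℕ) (u t : Tm) : sz t ≤ sz (substIn n u t) :=
  sz_subst t _

lemma sz_plug (L : List Tm) (s : Tm) : sz s ≤ sz (plug L s) := by
  induction L with
  | nil => simp [plug]
  | cons e L ih => simp [plug, sz]; omega

lemma plug_esub (L : List Tm) (x y : Tm) :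
    ∃ x' y', plug L (.esub x y) = .esub x' y' := by
  cases L with
  | nil => exact ⟨x, y, rfl⟩
  | cons e L' => exact ⟨plug L' (.esub x y), e, rfl⟩

lemma rename_eq_var {f : ℕ → ℕ} {x : Tm} {m : ℕ} (h : rename f x = .var m) :
    ∃ j, x = .var j ∧ f j = m := by
  cases x <;> simp_all [rename]

lemma rename_eq_esub {f : ℕ → ℕ} {x y z : Tm} (h : rename f x = .esub y z) :
    ∃ v w, x = .esub v w ∧ rename (liftR f) v = y ∧ rename f w = z := by
  cases x <;> simp_all [rename]

lemma liftR_succ_eq {i k : ℕ} (h : liftR (· + 1) i = k + 1) : i = k := by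
  cases i with
  | zero => simp [liftR] at h
  | succ j => simp [liftR] at h; omega

/-- the key invariant on substitutions -/
def Q (σ : ℕ → Tm) : Prop := ∀ k e, σ k ≠ .esub (.var k) e

lemma Q_lift {σ : ℕ → Tm} (hσ : Q σ) : Q (liftS σ) := by
  intro k e h
  cases k with
  | zero => simp [liftS] at h
  | succ k =>
    simp only [liftS] at h
    obtain ⟨v, w, hx, hv, hw⟩ := rename_eq_esub h
    obtain ⟨j, hj, hfj⟩ := rename_eq_var hv
    have hjk : j = k := liftR_succ_eq hfj
    subst hj
    rw [hjk] at hx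
    exact hσ k w hx

lemma Q_base (n : ℕ) (u : Tm) :
    Q (liftS (fun k => match k with | 0 => u | k + 1 => Tm.var (k + n))) := by
  intro k e h
  cases k with
  | zero => simp [liftS] at h
  | succ k =>
    simp only [liftS] at h
    cases k with
    | zero =>
      obtain ⟨v, w, hx, hv, hw⟩ := rename_eq_esub h
      obtain ⟨j, hj, hfj⟩ := rename_eq_var hv
      cases j with
      | zero => simp [liftR] at hfj
      | succ j => simp [liftR] at hfj
    | succ k => simp [rename] at h

lemma not_subst_eq_esub_self :
    ∀ (c : Tm) (σ : ℕ → Tm), Q σ → ∀ w, subst σ c ≠ .esub c w := by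
  intro c
  induction c with
  | var k => intro σ hσ w h; exact hσ k w h
  | app a b _ _ => intro σ _ w h; simp [subst] at h
  | lam a _ => intro σ _ w h; simp [subst] at h
  | bang a _ => intro σ _ w h; simp [subst] at h
  | der a _ => intro σ _ w h; simp [subst] at h
  | esub a b iha _ =>
    intro σ hσ w h
    simp only [subst, Tm.esub.injEq] at h
    exact iha (liftS σ) (Q_lift hσ) b h.1

lemma no_step_var {p : Rule} {k : ℕ} {t' : Tm} (h : Step p (Tm.var k) t') :
    False := by
  cases h with
  | root hr => cases hr

lemma no_step_bang {p : Rule} {u t' : Tm} (h : Step p (Tm.bang u) t') :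
    False := by
  cases h with
  | root hr => cases hr

lemma step_subst_esub {p : Rule} {a a' : Tm} (h : Step p a a') :
    ∀ σ : ℕ → Tm, Q (liftS σ) → ∀ e, subst σ a = .esub a' e → p = .sb := by
  induction h with
  | root hr =>
    intro σ _ e heq
    cases hr with
    | dB L t u => simp [subst] at heq
    | sb L t u => rfl
    | db L t => simp [subst] at heq
  | appL u h ih => intro σ _ e heq; simp [subst] at heq
  | appR t h ih => intro σ _ e heq; simp [subst] at heq
  | lam h ih => intro σ _ e heq; simp [subst] at heq
  | der h ih => intro σ _ e heq; simp [subst] at heq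
  | esubL u h ih =>
    intro σ hσ e heq
    simp only [subst, Tm.esub.injEq] at heq
    exact ih (liftS σ) (Q_lift hσ) u heq.1
  | esubR t h ih =>
    intro σ hσ e heq
    simp only [subst, Tm.esub.injEq] at heq
    exact absurd heq.1 (not_subst_eq_esub_self _ (liftS σ) hσ _)

lemma step_esub_bang_self {p : Rule} {b b' : Tm} (h : Step p b b') :
    ∀ u, b = .esub (.bang u) b' → p = .sb := by
  induction h with
  | root hr =>
    intro u heq
    cases hr with
    | dB L t v => exact absurd heq (by simp)
    | sb L t v => rfl
    | db L t => exact absurd heq (by simp)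
  | appL u h ih => intro v heq; simp at heq
  | appR t h ih => intro v heq; simp at heq
  | lam h ih => intro v heq; simp at heq
  | der h ih => intro v heq; simp at heq
  | esubL u h ih =>
    intro v heq
    obtain ⟨hc, hu⟩ := Tm.esub.inj heq
    subst hc
    exact absurd h (fun hh => no_step_bang hh)
  | esubR t h ih =>
    intro v heq
    obtain ⟨hc, hd⟩ := Tm.esub.inj heq
    subst hc
    exact ih v hd

lemma step_ne {p : Rule} {t t' : Tm} (h : Step p t t') : t ≠ t' := by
  induction h with
  | root hr =>
    intro heq
    cases hr with
    | dB L s u =>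
      obtain ⟨x, y, hp⟩ := plug_esub L s (rename (· + L.length) u)
      rw [hp] at heq
      exact Tm.noConfusion heq
    | sb L a u =>
      cases L with
      | nil =>
        simp only [plug] at heq
        cases a with
        | var k =>
          cases k with
          | zero =>
            simp only [substIn, subst] at heq
            have hsz := congrArg sz heq
            simp [sz] at hsz
            omega
          | succ k => simp [substIn, subst] at heq
        | app c d => simp [substIn, subst] at heq
        | lam c => simp [substIn, subst] at heq
        | bang c => simp [substIn, subst] at heq
        | der c => simp [substIn, subst] at heq
        | esub c d =>
          simp only [substIn, subst, Tm.esub.injEq] at heq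
          exact not_subst_eq_esub_self c _ (Q_base 0 u) d heq.1.symm
      | cons e L' =>
        simp only [plug] at heq
        have h2 := (Tm.esub.inj heq).2
        have hsz := congrArg sz h2
        simp [sz] at hsz
    | db L s =>
      cases L with
      | nil =>
        simp only [plug] at heq
        have hsz := congrArg sz heq
        simp [sz] at hsz
        omega
      | cons e L' =>
        simp only [plug] at heq
        exact Tm.noConfusion heq
  | appL u h ih => intro heq; exact ih (Tm.app.inj heq).1
  | appR t h ih => intro heq; exact ih (Tm.app.inj heq).2
  | lam h ih => intro heq; exact ih (Tm.lam.inj heq)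
  | der h ih => intro heq; exact ih (Tm.der.inj heq)
  | esubL u h ih => intro heq; exact ih (Tm.esub.inj heq).1
  | esubR t h ih => intro heq; exact ih (Tm.esub.inj heq).2

lemma step_app_shape {p : Rule} {a b t' : Tm} (h : Step p (Tm.app a b) t') :
    p = .dB ∨ ∃ x y, t' = Tm.app x y := by
  cases h with
  | root hr =>
    cases hr with
    | dB L t u => exact Or.inl rfl
  | appL u h => exact Or.inr ⟨_, _, rfl⟩
  | appR t h => exact Or.inr ⟨_, _, rfl⟩

lemma step_der_shape {p : Rule} {a t' : Tm} (h : Step p (Tm.der a) t') :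
    p = .db ∨ ∃ x, t' = Tm.der x ∧ Step p a x := by
  cases h with
  | root hr =>
    cases hr with
    | db L t => exact Or.inl rfl
  | der h => exact Or.inr ⟨_, rfl, h⟩

lemma step_esub_analysis {p : Rule} {a b t' : Tm} (h : Step p (Tm.esub a b) t') :
    p = .sb ∨ (∃ a', t' = Tm.esub a' b ∧ Step p a a') ∨
      (∃ b', t' = Tm.esub a b' ∧ Step p b b') := by
  cases h with
  | root hr =>
    cases hr with
    | sb L t u => exact Or.inl rfl
  | esubL u h => exact Or.inr (Or.inl ⟨_, rfl, h⟩)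
  | esubR t h => exact Or.inr (Or.inr ⟨_, rfl, h⟩)

lemma root_step_unique {p₁ p₂ : Rule} {t t' : Tm}
    (hr : Root p₁ t t') (h₂ : Step p₂ t t') : p₁ = p₂ := by
  cases hr with
  | dB L s u =>
    rcases step_app_shape h₂ with h | ⟨x, y, hxy⟩
    · exact h.symm
    · obtain ⟨x', y', hp⟩ := plug_esub L s (rename (· + L.length) u)
      rw [hp] at hxy
      exact Tm.noConfusion hxy
  | db L s =>
    rcases step_der_shape h₂ with h | ⟨x, hx, hstep⟩
    · exact h.symm
    · cases L with
      | nil => exact absurd hstep no_step_bang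
      | cons e L' => simp only [plug] at hx; exact Tm.noConfusion hx
  | sb L a u =>
    rcases step_esub_analysis h₂ with h | ⟨a', ht', hstep⟩ | ⟨b', ht', hstep⟩
    · exact h.symm
    · cases L with
      | nil =>
        simp only [plug, substIn, List.length_nil] at ht'
        exact (step_subst_esub hstep _ (Q_base 0 u) (Tm.bang u) ht').symm
      | cons e L' =>
        simp only [plug] at ht'
        have h2 := (Tm.esub.inj ht').2
        have hsz := congrArg sz h2
        simp [sz] at hsz
    · cases L with
      | nil => exact absurd hstep no_step_bang
      | cons e L' =>
        simp only [plug] at ht'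
        obtain ⟨h1, h2⟩ := Tm.esub.inj ht'
        cases L' with
        | nil =>
          subst h2
          exact (step_esub_bang_self hstep u rfl).symm
        | cons e₂ L'' =>
          simp only [plug] at h1
          have hsz := congrArg sz h1
          have hp := sz_plug L'' (substIn (e :: e₂ :: L'').length u a)
          have hs := sz_substIn (e :: e₂ :: L'').length u a
          have he := sz_pos e₂
          simp only [sz] at hsz
          omega

lemma step_unique_aux : ∀ {t t' : Tm} {p₁ : Rule}, Step p₁ t t' →
    ∀ p₂ : Rule, Step p₂ t t' → p₁ = p₂ := by
  intro t t' p₁ h₁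
  induction h₁ with
  | root hr => intro p₂ h₂; exact root_step_unique hr h₂
  | appL u h ih =>
    intro p₂ h₂
    cases h₂ with
    | root hr₂ => exact (root_step_unique hr₂ (Step.appL u h)).symm
    | appL u h₂' => exact ih _ h₂'
    | appR t h₂' => exact absurd rfl (step_ne h)
  | appR t h ih =>
    intro p₂ h₂
    cases h₂ with
    | root hr₂ => exact (root_step_unique hr₂ (Step.appR t h)).symm
    | appL u h₂' => exact absurd rfl (step_ne h)
    | appR t h₂' => exact ih _ h₂'
  | lam h ih =>
    intro p₂ h₂
    cases h₂ with
    | root hr₂ => exact (root_step_unique hr₂ (Step.lam h)).symm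
    | lam h₂' => exact ih _ h₂'
  | der h ih =>
    intro p₂ h₂
    cases h₂ with
    | root hr₂ => exact (root_step_unique hr₂ (Step.der h)).symm
    | der h₂' => exact ih _ h₂'
  | esubL u h ih =>
    intro p₂ h₂
    cases h₂ with
    | root hr₂ => exact (root_step_unique hr₂ (Step.esubL u h)).symm
    | esubL u h₂' => exact ih _ h₂'
    | esubR t h₂' => exact absurd rfl (step_ne h)
  | esubR t h ih =>
    intro p₂ h₂
    cases h₂ with
    | root hr₂ => exact (root_step_unique hr₂ (Step.esubR t h)).symm
    | esubL u h₂' => exact absurd rfl (step_ne h)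
    | esubR t h₂' => exact ih _ h₂'

end RuleUniqueAux

/-- **Uniqueness of the rule producing a given reduct** (Lemma 2): if
`t →_{p₁} t'` and `t →_{p₂} t'` then `p₁ = p₂`. -/
theorem rule_unique {t t' : Tm} {p₁ p₂ : Rule}
    (h₁ : Step p₁ t t') (h₂ : Step p₂ t t') : p₁ = p₂ :=
  RuleUniqueAux.step_unique_aux h₁ _ h₂
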